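/- Let $(w_n)_{n\ge1}$ be a strictly increasing sequence in $(0,1)$ with $w_n\to1$, and let $(\rho_n)$ be positive reals with $\sum_{k\ge1}\epsilon_k<\infty$. Then for every $n\ge1$ and all real numbers $u,v$ with $0<v\le u\le t_n$, one has $P_h(u)-P_h(v) \;\ge\; \frac{1}{\pi}\left(\epsilon_n\,\frac{3(u-v)}{100\,t_n^2} \;-\; \frac{1}{v}\sum_{k>n}\epsilon_k\right)$. -/

import Mathlib

open Filter MeasureTheory

/-- `t_k := (1 - w_k²)/(1 + w_k²)`. -/
noncomputable def tseq (w : ℕ → ℝ) (k : ℕ) : ℝ := (1 - w k ^ 2) / (1 + w k ^ 2)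

/-- `ε_k := ((1 - w_k)/(1 - w_{k+1})) ρ_k`. -/
noncomputable def epsseq (w ρ : ℕ → ℝ) (k : ℕ) : ℝ := (1 - w k) / (1 - w (k + 1)) * ρ k

/-- `h := ∑_{k≥1} (ε_k/t_k) 1_{[2t_k, 3t_k]}`. -/
noncomputable def hfun (w ρ : ℕ → ℝ) (x : ℝ) : ℝ :=
  ∑' k : ℕ, Set.indicator (Set.Icc (2 * tseq w (k + 1)) (3 * tseq w (k + 1)))
    (fun _ => epsseq w ρ (k + 1) / tseq w (k + 1)) x

/-- `P_h(y) := (1/π) ∫_ℝ y/(y² + x²) h(x) dx`, the Poisson integral of `h` for the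
upper half-plane evaluated at `iy`. -/
noncomputable def Ph (w ρ : ℕ → ℝ) (y : ℝ) : ℝ :=
  (1 / Real.pi) * ∫ x : ℝ, y / (y ^ 2 + x ^ 2) * hfun w ρ x

/-!
Split `h` into its bumps `(ε_k/t_k)·1_{[2t_k,3t_k]}`. Each bump has mass `ε_k` and the kernel
`K_y(x) = y/(y²+x²)` is bounded by `1/y`, so `P_h` may be computed bump by bump.
Since `K_u(x) - K_v(x) = (u-v)(x²-uv)/((u²+x²)(v²+x²))`, the bumps with `k < n` (where
`x ≥ 2t_k ≥ 2u`) contribute nonnegatively to `P_h(u) - P_h(v)`, the bump `k = n` contributes at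
least `ε_n · 3(u-v)/(100 t_n²)`, and each bump with `k > n` at least `-ε_k/v`.
-/

open Set

noncomputable def halfPlanePoissonKernel (y x : ℝ) : ℝ := y / (y ^ 2 + x ^ 2)

section Kernel

variable {u v y x : ℝ}

theorem halfPlanePoissonKernel_nonneg (hy : 0 ≤ y) : 0 ≤ halfPlanePoissonKernel y x := by
  unfold halfPlanePoissonKernel
  positivity

theorem halfPlanePoissonKernel_le_inv (hy : 0 < y) : halfPlanePoissonKernel y x ≤ 1 / y := by
  unfold halfPlanePoissonKernel
  rw [div_le_div_iff₀ (by positivity) hy]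
  nlinarith [sq_nonneg x]

theorem continuous_halfPlanePoissonKernel (hy : y ≠ 0) :
    Continuous (halfPlanePoissonKernel y) :=
  continuous_const.div (by fun_prop) fun x => by positivity

theorem halfPlanePoissonKernel_sub (hu : u ≠ 0) (hv : v ≠ 0) :
    halfPlanePoissonKernel u x - halfPlanePoissonKernel v x
      = (u - v) * (x ^ 2 - u * v) / ((u ^ 2 + x ^ 2) * (v ^ 2 + x ^ 2)) := by
  have : u ^ 2 + x ^ 2 ≠ 0 := by positivity
  have : v ^ 2 + x ^ 2 ≠ 0 := by positivity
  unfold halfPlanePoissonKernel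
  field_simp
  ring

theorem halfPlanePoissonKernel_le_of_mul_le_sq (hv : 0 < v) (hvu : v ≤ u) (hx : u * v ≤ x ^ 2) :
    halfPlanePoissonKernel v x ≤ halfPlanePoissonKernel u x := by
  rw [← sub_nonneg, halfPlanePoissonKernel_sub (by linarith) hv.ne']
  have : 0 ≤ u - v := by linarith
  have : 0 ≤ x ^ 2 - u * v := by linarith
  positivity

theorem halfPlanePoissonKernel_sub_ge_of_mem_Icc {t : ℝ} (hv : 0 < v) (hvu : v ≤ u) (hut : u ≤ t)
    (hx : x ∈ Icc (2 * t) (3 * t)) :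
    3 * (u - v) / (100 * t ^ 2) ≤ halfPlanePoissonKernel u x - halfPlanePoissonKernel v x := by
  obtain ⟨hx₂, hx₃⟩ := hx
  have ht : 0 < t := by linarith
  have hu : 0 < u := by linarith
  have huv : 0 ≤ u - v := by linarith
  have hnum : 3 * t ^ 2 ≤ x ^ 2 - u * v := by nlinarith
  have hden : (u ^ 2 + x ^ 2) * (v ^ 2 + x ^ 2) ≤ 100 * t ^ 4 := by
    have : u ^ 2 + x ^ 2 ≤ 10 * t ^ 2 := by nlinarith
    have : v ^ 2 + x ^ 2 ≤ 10 * t ^ 2 := by nlinarith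
    nlinarith [sq_nonneg x, sq_nonneg v]
  rw [halfPlanePoissonKernel_sub hu.ne' hv.ne']
  calc 3 * (u - v) / (100 * t ^ 2) = (u - v) * (3 * t ^ 2) / (100 * t ^ 4) := by
        field_simp
    _ ≤ (u - v) * (x ^ 2 - u * v) / ((u ^ 2 + x ^ 2) * (v ^ 2 + x ^ 2)) :=
        div_le_div₀ (by nlinarith) (mul_le_mul_of_nonneg_left hnum huv) (by positivity) hden

end Kernel

theorem hasSum_integral_mul_tsum_indicator_const {α : Type*} [MeasurableSpace α]
    {μ : Measure α} {g : α → ℝ} {M : ℝ} {S : ℕ → Set α} {c : ℕ → ℝ}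
    (hg : AEStronglyMeasurable g μ) (hgM : ∀ x, ‖g x‖ ≤ M)
    (hS : ∀ k, MeasurableSet (S k)) (hSfin : ∀ k, μ (S k) ≠ ⊤)
    (hc : Summable fun k => c k * μ.real (S k)) :
    HasSum (fun k => c k * ∫ x in S k, g x ∂μ)
      (∫ x, g x * ∑' k, (S k).indicator (fun _ => c k) x ∂μ) := by
  have hbound : ∀ k x, ‖c k * g x‖ ≤ |c k| * M := fun k x => by
    rw [norm_mul, Real.norm_eq_abs]
    exact mul_le_mul_of_nonneg_left (hgM x) (abs_nonneg _)
  have hint : ∀ k, IntegrableOn (fun x => c k * g x) (S k) μ := fun k =>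
    Measure.integrableOn_of_bounded (hSfin k) (hg.const_mul _) (.of_forall (hbound k))
  have hnorm : ∀ k, ∫ x, ‖(S k).indicator (fun x => c k * g x) x‖ ∂μ
      ≤ |c k| * M * μ.real (S k) := fun k => by
    simp_rw [norm_indicator_eq_indicator_norm]
    rw [integral_indicator (hS k)]
    refine (Real.le_norm_self _).trans (norm_setIntegral_le_of_norm_le_const
      (hSfin k).lt_top fun x _ => ?_)
    rw [norm_norm]
    exact hbound k x
  have hsum : Summable fun k => ∫ x, ‖(S k).indicator (fun x => c k * g x) x‖ ∂μ := by
    refine .of_nonneg_of_le (fun k => integral_nonneg fun _ => norm_nonneg _) hnorm ?_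
    refine (hc.abs.mul_left M).congr fun k => ?_
    rw [abs_mul, abs_of_nonneg measureReal_nonneg]
    ring
  have hterm : ∀ k x, g x * (S k).indicator (fun _ => c k) x
      = (S k).indicator (fun x => c k * g x) x := fun k x => by
    rw [mul_comm, indicator_mul_left]
  simp_rw [← tsum_mul_left, hterm]
  have h := hasSum_integral_of_summable_integral_norm
    (fun k => (hint k).integrable_indicator (hS k)) hsum
  simp_rw [integral_indicator (hS _), integral_const_mul] at h
  exact h

theorem add_tsum_le_tsum_of_nonneg_head {D e : ℕ → ℝ} {n : ℕ} {a : ℝ}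
    (hD : Summable D) (he : Summable e) (hhead : ∀ k < n, 0 ≤ D k) (hn : a ≤ D n)
    (htail : ∀ k, e k ≤ D (n + 1 + k)) :
    a + ∑' k, e k ≤ ∑' k, D k := by
  rw [← hD.sum_add_tsum_nat_add (n + 1), Finset.sum_range_succ]
  have hhead_sum : 0 ≤ ∑ k ∈ Finset.range n, D k :=
    Finset.sum_nonneg fun k hk => hhead k (Finset.mem_range.1 hk)
  have htail_sum : ∑' k, e k ≤ ∑' k, D (k + (n + 1)) :=
    he.tsum_le_tsum (fun k => add_comm k (n + 1) ▸ htail k) ((summable_nat_add_iff _).2 hD)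
  linarith

section Bumps

variable {w ρ : ℕ → ℝ}

theorem tseq_pos {k : ℕ} (hw : w k ∈ Ioo (0 : ℝ) 1) : 0 < tseq w k := by
  obtain ⟨h0, h1⟩ := hw
  exact div_pos (by nlinarith) (by positivity)

theorem tseq_antitone (hmono : Monotone w) (h0 : ∀ n, 0 ≤ w n) : Antitone (tseq w) := by
  intro k l hkl
  have hsq : w k ^ 2 ≤ w l ^ 2 := pow_le_pow_left₀ (h0 k) (hmono hkl) 2
  have htseq : ∀ n, tseq w n = 2 / (1 + w n ^ 2) - 1 := fun n => by
    rw [tseq]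
    field_simp
    ring
  rw [htseq, htseq]
  gcongr

theorem epsseq_nonneg (hw : ∀ n, w n < 1) {k : ℕ} (hρ : 0 ≤ ρ k) : 0 ≤ epsseq w ρ k :=
  mul_nonneg (div_nonneg (sub_nonneg.2 (hw k).le) (sub_nonneg.2 (hw (k + 1)).le)) hρ

noncomputable def bump (w : ℕ → ℝ) (k : ℕ) : Set ℝ := Icc (2 * tseq w k) (3 * tseq w k)

theorem measurableSet_bump (k : ℕ) : MeasurableSet (bump w k) := measurableSet_Icc

theorem volume_bump_ne_top (k : ℕ) : volume (bump w k) ≠ ⊤ := measure_Icc_lt_top.ne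

theorem volume_real_bump {k : ℕ} (ht : 0 ≤ tseq w k) : volume.real (bump w k) = tseq w k := by
  rw [bump, Real.volume_real_Icc_of_le (by linarith)]
  ring

theorem Ph_eq_integral (y : ℝ) :
    Ph w ρ y = 1 / Real.pi * ∫ x, halfPlanePoissonKernel y x * hfun w ρ x :=
  rfl

theorem hasSum_integral_mul_hfun (hw : ∀ n, w n ∈ Ioo (0 : ℝ) 1)
    (hsum : Summable (epsseq w ρ)) {y : ℝ} (hy : 0 < y) :
    HasSum (fun k => epsseq w ρ (k + 1) / tseq w (k + 1) *
        ∫ x in bump w (k + 1), halfPlanePoissonKernel y x)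
      (∫ x, halfPlanePoissonKernel y x * hfun w ρ x) := by
  refine hasSum_integral_mul_tsum_indicator_const
    (continuous_halfPlanePoissonKernel hy.ne').aestronglyMeasurable (M := 1 / y) ?_
    (fun _ => measurableSet_bump _) (fun _ => volume_bump_ne_top _) ?_
  · intro x
    rw [Real.norm_of_nonneg (halfPlanePoissonKernel_nonneg hy.le)]
    exact halfPlanePoissonKernel_le_inv hy
  · refine ((summable_nat_add_iff 1).2 hsum).congr fun k => ?_
    have ht := tseq_pos (hw (k + 1))
    rw [volume_real_bump ht.le, div_mul_cancel₀ _ ht.ne']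

theorem mul_epsseq_le_bump_integral_sub (hw : ∀ n, w n ∈ Ioo (0 : ℝ) 1) (hρ : ∀ n, 0 < ρ n)
    {a u v : ℝ} (hu : 0 < u) (hv : 0 < v) {k : ℕ}
    (ha : ∀ x ∈ bump w k, a ≤ halfPlanePoissonKernel u x - halfPlanePoissonKernel v x) :
    a * epsseq w ρ k ≤ epsseq w ρ k / tseq w k * (∫ x in bump w k, halfPlanePoissonKernel u x)
      - epsseq w ρ k / tseq w k * ∫ x in bump w k, halfPlanePoissonKernel v x := by
  have ht := tseq_pos (hw k)
  have hint : ∀ {y : ℝ}, 0 < y → IntegrableOn (halfPlanePoissonKernel y) (bump w k) :=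
    fun hy => (continuous_halfPlanePoissonKernel hy.ne').integrableOn_Icc
  have hmean := setIntegral_ge_of_const_le_real (measurableSet_bump k) (volume_bump_ne_top k) ha
    ((hint hu).sub (hint hv))
  rw [volume_real_bump ht.le, integral_sub (hint hu) (hint hv)] at hmean
  calc a * epsseq w ρ k = epsseq w ρ k / tseq w k * (a * tseq w k) := by
        field_simp
    _ ≤ _ := by
        rw [← mul_sub]
        exact mul_le_mul_of_nonneg_left hmean
          (div_nonneg (epsseq_nonneg (fun n => (hw n).2) (hρ k).le) ht.le)

end Bumps

theorem poisson_integral_difference_lower_bound_general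
    (w ρ : ℕ → ℝ) (hw_mono : StrictMono w) (hw_mem : ∀ n, w n ∈ Set.Ioo (0 : ℝ) 1)
    (hρ : ∀ n, 0 < ρ n)
    (hsum : Summable (fun k : ℕ => epsseq w ρ k)) :
    ∀ n : ℕ, 1 ≤ n → ∀ u v : ℝ, 0 < v → v ≤ u → u ≤ tseq w n →
      (1 / Real.pi) * (epsseq w ρ n * (3 * (u - v)) / (100 * tseq w n ^ 2)
          - (1 / v) * ∑' k : ℕ, epsseq w ρ (n + 1 + k))
        ≤ Ph w ρ u - Ph w ρ v := by
  intro n hn u v hv hvu hut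
  obtain ⟨m, rfl⟩ : ∃ m, n = m + 1 := ⟨n - 1, by omega⟩
  have hu : 0 < u := hv.trans_le hvu
  have hbumps := (hasSum_integral_mul_hfun hw_mem hsum hu).sub
    (hasSum_integral_mul_hfun hw_mem hsum hv)
  rw [Ph_eq_integral, Ph_eq_integral, ← mul_sub, ← hbumps.tsum_eq, sub_eq_add_neg, ← neg_mul,
    ← tsum_mul_left]
  refine mul_le_mul_of_nonneg_left (add_tsum_le_tsum_of_nonneg_head (n := m) hbumps.summable
    ((hsum.comp_injective (add_right_injective _)).mul_left _) ?_ ?_ ?_) (by positivity)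
  · intro k hk
    have htk : tseq w (m + 1) ≤ tseq w (k + 1) :=
      tseq_antitone hw_mono.monotone (fun n => (hw_mem n).1.le) (by omega)
    simpa using mul_epsseq_le_bump_integral_sub hw_mem hρ hu hv fun x hx => sub_nonneg.2 <|
      halfPlanePoissonKernel_le_of_mul_le_sq hv hvu (by nlinarith [hx.1])
  · calc _ = 3 * (u - v) / (100 * tseq w (m + 1) ^ 2) * epsseq w ρ (m + 1) := by ring
      _ ≤ _ := mul_epsseq_le_bump_integral_sub hw_mem hρ hu hv fun x hx =>
          halfPlanePoissonKernel_sub_ge_of_mem_Icc hv hvu hut hx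
  · intro k
    rw [Nat.add_right_comm (m + 1) 1]
    exact mul_epsseq_le_bump_integral_sub hw_mem hρ hu hv fun x _ => by
      linarith [halfPlanePoissonKernel_nonneg (x := x) hu.le,
        halfPlanePoissonKernel_le_inv (x := x) hv]

/-- Main intermediate estimate in the proof of Lemma 3.3: for `n ≥ 1` and
`0 < v ≤ u ≤ tₙ`, one has
`P_h(u) - P_h(v) ≥ (1/π)(εₙ · 3(u-v)/(100 tₙ²) - (1/v) ∑_{k>n} ε_k)`. -/
theorem poisson_integral_difference_lower_bound
    (w ρ : ℕ → ℝ) (hw_mono : StrictMono w) (hw_mem : ∀ n, w n ∈ Set.Ioo (0 : ℝ) 1)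
    (hw_lim : Tendsto w atTop (nhds 1))
    (hρ : ∀ n, 0 < ρ n)
    (hsum : Summable (fun k : ℕ => epsseq w ρ k)) :
    ∀ n : ℕ, 1 ≤ n → ∀ u v : ℝ, 0 < v → v ≤ u → u ≤ tseq w n →
      (1 / Real.pi) * (epsseq w ρ n * (3 * (u - v)) / (100 * tseq w n ^ 2)
          - (1 / v) * ∑' k : ℕ, epsseq w ρ (n + 1 + k))
        ≤ Ph w ρ u - Ph w ρ v :=
  poisson_integral_difference_lower_bound_general w ρ hw_mono hw_mem hρ hsum
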